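/- For all s ∈ (4, 4.5): (4/5)·(s/5 − 1)·ln( |(2·√(s²/4 − s + 5) + (3/5)·s + 2) / (4·√(s²/5 − 2s + 5) + 8·(s/5 − 1))| ) + ((s − 2)/4)·ln( |(2·√(s²/2 − 2s + 2) + s − 2) / (2·√(s²/4 − s + 5) − 4)| ) > 0. -/
import Mathlib


set_option maxHeartbeats 1000000 in
/-- For all `s ∈ (4, 4.5)` the stated linear combination of
logarithms is positive. -/
theorem log_combination_pos (s : ℝ) (hs : s ∈ Set.Ioo (4 : ℝ) 4.5) :
    4 / 5 * (s / 5 - 1) *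
        Real.log |(2 * Real.sqrt (s ^ 2 / 4 - s + 5) + 3 / 5 * s + 2)
          / (4 * Real.sqrt (s ^ 2 / 5 - 2 * s + 5) + 8 * (s / 5 - 1))|
      + (s - 2) / 4 *
        Real.log |(2 * Real.sqrt (s ^ 2 / 2 - 2 * s + 2) + s - 2)
          / (2 * Real.sqrt (s ^ 2 / 4 - s + 5) - 4)| > 0 := by
  obtain ⟨hs1, hs2⟩ := hs
  have hs2' : s < 4.5 := hs2
  set q := Real.sqrt (s ^ 2 / 4 - s + 5) with hq
  set r := Real.sqrt (s ^ 2 / 5 - 2 * s + 5) with hr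
  set p := Real.sqrt (s ^ 2 / 2 - 2 * s + 2) with hp
  have hq0 : 0 ≤ q := Real.sqrt_nonneg _
  have hr0 : 0 ≤ r := Real.sqrt_nonneg _
  have hp0 : 0 ≤ p := Real.sqrt_nonneg _
  have hq_ub : q ≤ (s + 8) / 5 := by
    rw [hq, show (s + 8) / 5 = Real.sqrt (((s + 8) / 5) ^ 2) from
      (Real.sqrt_sq (by linarith)).symm]
    exact Real.sqrt_le_sqrt (by nlinarith)
  have hq_lb : (2.2 : ℝ) ≤ q := by
    rw [hq, show (2.2 : ℝ) = Real.sqrt ((2.2 : ℝ) ^ 2) from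
      (Real.sqrt_sq (by norm_num)).symm]
    exact Real.sqrt_le_sqrt (by nlinarith)
  have hr_lb : 0.447 * (5 - s) ≤ r := by
    rw [hr, show (0.447 : ℝ) * (5 - s) = Real.sqrt ((0.447 * (5 - s)) ^ 2) from
      (Real.sqrt_sq (by nlinarith)).symm]
    exact Real.sqrt_le_sqrt (by nlinarith)
  have hp_lb : (s - 2) / 2 ≤ p := by
    rw [hp, show (s - 2) / 2 = Real.sqrt (((s - 2) / 2) ^ 2) from
      (Real.sqrt_sq (by linarith)).symm]
    exact Real.sqrt_le_sqrt (by nlinarith)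
  have hd1 : (0 : ℝ) < 4 * r + 8 * (s / 5 - 1) := by nlinarith
  have hn1 : (0 : ℝ) < 2 * q + 3 / 5 * s + 2 := by linarith
  have hd2 : (0 : ℝ) < 2 * q - 4 := by linarith
  have hn2 : (0 : ℝ) < 2 * p + s - 2 := by linarith
  have hR1pos : 0 < (2 * q + 3 / 5 * s + 2) / (4 * r + 8 * (s / 5 - 1)) :=
    div_pos hn1 hd1
  have hR2pos : 0 < (2 * p + s - 2) / (2 * q - 4) := div_pos hn2 hd2
  have hR1 : (2 * q + 3 / 5 * s + 2) / (4 * r + 8 * (s / 5 - 1)) ≤ 125 := by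
    rw [div_le_iff₀ hd1]
    nlinarith
  have hR2 : 5 ≤ (2 * p + s - 2) / (2 * q - 4) := by
    rw [le_div_iff₀ hd2]
    nlinarith
  rw [abs_of_pos hR1pos, abs_of_pos hR2pos]
  set R1 := (2 * q + 3 / 5 * s + 2) / (4 * r + 8 * (s / 5 - 1)) with hR1def
  set R2 := (2 * p + s - 2) / (2 * q - 4) with hR2def
  have hcube : R1 ≤ R2 ^ 3 := by
    have h125 : (5:ℝ) ^ 3 ≤ R2 ^ 3 := pow_le_pow_left₀ (by norm_num) hR2 3
    norm_num at h125
    linarith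
  have hlog2 : 0 < Real.log R2 := Real.log_pos (by linarith)
  have hlog1 : Real.log R1 ≤ 3 * Real.log R2 := by
    have h := Real.log_le_log hR1pos hcube
    rwa [Real.log_pow, Nat.cast_ofNat] at h
  have hc1 : 4 / 5 * (s / 5 - 1) ≤ 0 := by linarith
  have key := mul_le_mul_of_nonpos_left hlog1 hc1
  have hcoef : 0 < 3 * (4 / 5 * (s / 5 - 1)) + (s - 2) / 4 := by linarith
  nlinarith [mul_pos hcoef hlog2, key]
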